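/- arXiv:2402.14777 — 3 statements merged into one kernel-verified Lean document; each statement's English description precedes it below -/
import Mathlib

section
/- Let (Ω, μ) be a probability space and q a natural number. Let ε, Ẽ : Ω → (Fin q → ℝ) be integrable random vectors, and let G be a measurable event with μ(G) > 0 such that Ẽ is mean-independent of G, i.e. ∫_G Ẽ dμ = μ(G) • ∫_Ω Ẽ dμ componentwise. Let B ∈ ℝ^{q×q} be a matrix such that I − B is invertible, let A ⊆ Fin q, and let M ∈ ℝ^{q×q} be the diagonal matrix with M_{kk} = 1 if k ∉ A and M_{kk} = 0 otherwise. Define the random vector Z = (I − B)⁻¹ ★ (Ẽ + M ★ ε) (matrix-vector multiplication applied pointwise). Then the conditional expectation of Z given G factors as E[Z ∣ G] = (I − B)⁻¹ ★ v + ((I − B)⁻¹ M) ★ w, where v = ∫_Ω Ẽ dμ depends only on Ẽ and w = (1/μ(G)) ∫_G ε dμ depends only on the event G. -/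
open MeasureTheory Matrix

/-! Matrix–vector multiplication is a continuous linear map, so it commutes with the integral
over `G`; mean independence then replaces the `G`-average of `εt` by its full mean. -/

namespace MeasureTheory

variable {Ω m n : Type*} [MeasurableSpace Ω] {μ : Measure Ω} [Fintype m] [Fintype n]

theorem Integrable.mulVec {f : Ω → n → ℝ} (hf : Integrable f μ) (A : Matrix m n ℝ) :
    Integrable (fun ω => A *ᵥ f ω) μ :=
  (Matrix.mulVecLin A).toContinuousLinearMap.integrable_comp hf

theorem integral_mulVec {f : Ω → n → ℝ} (hf : Integrable f μ) (A : Matrix m n ℝ) :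
    ∫ ω, A *ᵥ f ω ∂μ = A *ᵥ ∫ ω, f ω ∂μ :=
  (Matrix.mulVecLin A).toContinuousLinearMap.integral_comp_comm hf

end MeasureTheory

theorem conditional_expectation_factors_general
    {Ω : Type*} [MeasurableSpace Ω] (μ : Measure Ω) [IsProbabilityMeasure μ]
    (q : ℕ) (ε εt : Ω → (Fin q → ℝ))
    (hε : Integrable ε μ) (hεt : Integrable εt μ)
    (G : Set Ω) (hGpos : 0 < μ G)
    (hmi : ∫ ω in G, εt ω ∂μ = (μ G).toReal • ∫ ω, εt ω ∂μ)
    (B : Matrix (Fin q) (Fin q) ℝ)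
    (M : Matrix (Fin q) (Fin q) ℝ)
    (Z : Ω → (Fin q → ℝ))
    (hZ : ∀ ω, Z ω = (1 - B)⁻¹ *ᵥ (εt ω + M *ᵥ ε ω)) :
    (μ G).toReal⁻¹ • ∫ ω in G, Z ω ∂μ =
      (1 - B)⁻¹ *ᵥ (∫ ω, εt ω ∂μ)
        + ((1 - B)⁻¹ * M) *ᵥ ((μ G).toReal⁻¹ • ∫ ω in G, ε ω ∂μ) := by
  have hG₀ : (μ G).toReal ≠ 0 := ENNReal.toReal_ne_zero.2 ⟨hGpos.ne', measure_ne_top μ G⟩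
  have hεG : Integrable ε (μ.restrict G) := hε.restrict
  have hεtG : Integrable εt (μ.restrict G) := hεt.restrict
  have hZG : ∫ ω in G, Z ω ∂μ =
      (1 - B)⁻¹ *ᵥ ((∫ ω in G, εt ω ∂μ) + M *ᵥ ∫ ω in G, ε ω ∂μ) := by
    simp_rw [hZ]
    rw [integral_mulVec (f := fun ω => εt ω + M *ᵥ ε ω) (hεtG.add (hεG.mulVec M)),
      integral_add hεtG (hεG.mulVec M), integral_mulVec hεG]
  rw [hZG, hmi, mulVec_add, smul_add, mulVec_smul, smul_smul, inv_mul_cancel₀ hG₀, one_smul,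
    ← mulVec_mulVec, mulVec_smul, mulVec_smul]

/-- In a linear SCM, the counterfactual expectation after conditioning on a context
event `G` and intervening (new weight matrix `B`, new noise `εt` on the intervened
coordinates `A`, old noise `ε` masked by `M` on the rest) decomposes as an
action-dependent term plus a linear map of the context-dependent noise mean. -/
theorem conditional_expectation_factors
    {Ω : Type*} [MeasurableSpace Ω] (μ : Measure Ω) [IsProbabilityMeasure μ]
    (q : ℕ) (ε εt : Ω → (Fin q → ℝ))
    (hε : Integrable ε μ) (hεt : Integrable εt μ)
    (G : Set Ω) (hG : MeasurableSet G) (hGpos : 0 < μ G)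
    (hmi : ∫ ω in G, εt ω ∂μ = (μ G).toReal • ∫ ω, εt ω ∂μ)
    (B : Matrix (Fin q) (Fin q) ℝ) (hB : IsUnit (1 - B))
    (A : Finset (Fin q))
    (M : Matrix (Fin q) (Fin q) ℝ)
    (hM : M = Matrix.diagonal (fun k => if k ∈ A then 0 else 1))
    (Z : Ω → (Fin q → ℝ))
    (hZ : ∀ ω, Z ω = (1 - B)⁻¹ *ᵥ (εt ω + M *ᵥ ε ω)) :
    (μ G).toReal⁻¹ • ∫ ω in G, Z ω ∂μ =
      (1 - B)⁻¹ *ᵥ (∫ ω, εt ω ∂μ)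
        + ((1 - B)⁻¹ * M) *ᵥ ((μ G).toReal⁻¹ • ∫ ω in G, ε ω ∂μ) :=
  conditional_expectation_factors_general μ q ε εt hε hεt G hGpos hmi B M Z hZ
end

section
/- Let m, n, r be natural numbers and suppose Y ∈ ℝ^{m×n} follows an exact latent factor model: Y_{uv} = ⟨p_u, q_v⟩ for some p_u, q_v ∈ ℝ^r, where ⟨·,·⟩ is the Euclidean inner product. Fix a target pair (i, j), a set of columns C ⊆ [n] and a set of rows R ⊆ [m]. Suppose β ∈ ℝ^C satisfies the training equations ∑_{j' ∈ C} β_{j'} Y_{i'j'} = Y_{i'j} for every i' ∈ R, and suppose the row factor p_i lies in the linear span of {p_{i'} : i' ∈ R}. Then the Synthetic Interventions prediction is exact: ∑_{j' ∈ C} β_{j'} Y_{ij'} = Y_{ij}. -/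
open Matrix Finset

theorem Matrix.dotProduct_eq_of_mem_span {ι R : Type*} [Fintype ι] [CommSemiring R]
    {s : Set (ι → R)} {v w : ι → R} (h : ∀ x ∈ s, x ⬝ᵥ v = x ⬝ᵥ w) {y : ι → R}
    (hy : y ∈ Submodule.span R s) : y ⬝ᵥ v = y ⬝ᵥ w :=
  LinearMap.eqOn_span (f := (dotProductBilin R R).flip v) (g := (dotProductBilin R R).flip w)
    h hy

theorem Matrix.sum_mul_dotProduct {ι κ R : Type*} [Fintype ι] [CommSemiring R]
    (C : Finset κ) (β : κ → R) (x : ι → R) (q : κ → ι → R) :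
    ∑ j ∈ C, β j * (x ⬝ᵥ q j) = x ⬝ᵥ ∑ j ∈ C, β j • q j := by
  simp only [dotProduct_sum, dotProduct_smul, smul_eq_mul]

/-- Exact recovery of Synthetic Interventions under the linear span inclusion
assumption: if `Y u v = ⟨p u, q v⟩`, the weights `β` fit the training rows `R` on
columns `C`, and `p i` lies in the span of `{p i' : i' ∈ R}`, then the SI prediction
for entry `(i, j)` is exact. -/
theorem synthetic_interventions_exact
    (m n r : ℕ) (Y : Matrix (Fin m) (Fin n) ℝ)
    (p : Fin m → (Fin r → ℝ)) (q : Fin n → (Fin r → ℝ))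
    (hY : ∀ u v, Y u v = ∑ k, p u k * q v k)
    (i : Fin m) (j : Fin n) (C : Finset (Fin n)) (R : Finset (Fin m))
    (β : Fin n → ℝ)
    (hβ : ∀ i' ∈ R, ∑ j' ∈ C, β j' * Y i' j' = Y i' j)
    (hspan : p i ∈ Submodule.span ℝ (p '' (R : Set (Fin m)))) :
    ∑ j' ∈ C, β j' * Y i j' = Y i j := by
  have hY' : ∀ u v, Y u v = p u ⬝ᵥ q v := hY
  simp only [hY', sum_mul_dotProduct] at hβ ⊢
  exact dotProduct_eq_of_mem_span (by rintro _ ⟨i', hi', rfl⟩; exact hβ i' hi') hspan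
end

section
/- The function (a, c) ↦ exp(5a²/4 + a·c/2) on ℝ × ℝ admits no finite-rank factorization: for every natural number r and every pair of functions p, q : ℝ → ℝ^r there exist real numbers a and c such that exp(5a²/4 + a·c/2) ≠ ∑_{k=1}^{r} p_k(a) q_k(c). -/
/-!
Were `exp (5a²/4 + ac/2) = ∑ k, p a k * q c k` for all `a, c`, every matrix of values
`L(aᵢ, cⱼ)` would have rank at most `r`. At the integer points `0, …, r` the
`(r + 1) × (r + 1)` matrix of values is `diag(exp (5i²/4))` times the Vandermonde matrix of the
distinct nodes `exp (i/2)`, hence invertible, of rank `r + 1`.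
-/

open Real Function

namespace Matrix

theorem rank_le_of_apply_eq_sum_mul {m n R : Type*} [Fintype n] [CommSemiring R]
    [StrongRankCondition R] {r : ℕ} (M : Matrix m n R) (p : m → Fin r → R) (q : n → Fin r → R)
    (h : ∀ i j, M i j = ∑ k, p i k * q j k) : M.rank ≤ r := by
  have hM : M = of p * (of q)ᵀ := by
    ext i j
    simp only [h, mul_apply, of_apply, transpose_apply]
  rw [hM]
  exact (rank_mul_le_left _ _).trans ((rank_le_card_width _).trans_eq (Fintype.card_fin r))

theorem det_exp_quadratic_ne_zero {n : ℕ} (α : ℝ) {β : ℝ} (hβ : β ≠ 0) {t : Fin n → ℝ}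
    (ht : Injective t) : (of fun i j : Fin n => exp (α * t i ^ 2 + β * t i * j)).det ≠ 0 := by
  have hfactor : of (fun i j : Fin n => exp (α * t i ^ 2 + β * t i * j)) =
      diagonal (fun i => exp (α * t i ^ 2)) * vandermonde (fun i => exp (β * t i)) := by
    ext i j
    rw [diagonal_mul, vandermonde_apply, ← exp_nat_mul, ← exp_add, of_apply]
    ring_nf
  have hnodes : Injective fun i => exp (β * t i) :=
    fun i j hij => ht (mul_left_cancel₀ hβ (exp_injective hij))
  rw [hfactor, det_mul, det_diagonal]
  exact mul_ne_zero (Finset.prod_ne_zero_iff.2 fun i _ => exp_ne_zero _)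
    (det_vandermonde_ne_zero_iff.2 hnodes)

end Matrix

/-- The function `(a, c) ↦ exp(5a²/4 + a c/2)` admits no finite-rank factorization:
for every `r` and every pair of functions `p q : ℝ → ℝ^r` there are `a c : ℝ` with
`exp(5a²/4 + a c/2) ≠ ∑ k, p a k * q c k`. -/
theorem exponential_example_no_finite_rank_factorization
    (r : ℕ) (p q : ℝ → Fin r → ℝ) :
    ∃ a c : ℝ, Real.exp (5 * a ^ 2 / 4 + a * c / 2) ≠ ∑ k, p a k * q c k := by
  by_contra! h
  set M := Matrix.of fun i j : Fin (r + 1) => exp (5 / 4 * (i : ℝ) ^ 2 + 1 / 2 * i * j)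
  have hrank_le : M.rank ≤ r :=
    M.rank_le_of_apply_eq_sum_mul (fun i => p i) (fun j => q j) fun i j => by
      rw [← h]
      simp only [M, Matrix.of_apply]
      ring_nf
  have hdet : M.det ≠ 0 :=
    Matrix.det_exp_quadratic_ne_zero _ (by norm_num) (Nat.cast_injective.comp Fin.val_injective)
  have hrank : M.rank = r + 1 := by
    rw [M.rank_of_isUnit ((M.isUnit_iff_isUnit_det).2 hdet.isUnit), Fintype.card_fin]
  omega
end
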